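/- Let B, B_+, B_- be sets of integer-valued functions on Ω with B_+, B_- ⊆ B disjoint, and suppose there exist i_0 ∈ Ω and an integer t such that f(i_0) > t for all f ∈ B_+ and g(i_0) < t for all g ∈ B_-. Then s(B) ≥ s(B_+) + s(B_-), where s(C) denotes the number of centers shattered by C. -/

import Mathlib

variable {Ω : Type*}

/-- `C` shatters the center `(σ, h)`. (For `σ = ∅` this is the trivial center,
shattered iff `C` is nonempty.) -/
def ShattersCenter (C : Set (Ω → ℤ)) (σ : Finset Ω) (h : Ω → ℤ) : Prop :=
  C.Nonempty ∧ ∀ θ : Ω → Bool, ∃ f ∈ C, ∀ i ∈ σ,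
    (θ i = true → f i > h i) ∧ (θ i = false → f i < h i)

/-- The set of centers shattered by `C`, level functions being supported on `σ`. -/
def shatteredCenters (C : Set (Ω → ℤ)) : Set (Finset Ω × (Ω → ℤ)) :=
  {p | (∀ i ∉ p.1, p.2 i = 0) ∧ ShattersCenter C p.1 p.2}

/-!
Every center shattered by `B₊` or by `B₋` is shattered by `B`. A center shattered by both
cannot involve `i₀`, since `B₊` lies strictly above `t` there and `B₋` strictly below; adding
`i₀` to it with level `t` gives a center shattered by `B₊ ∪ B₋`, the sign at `i₀` choosing
which of the two families supplies the witness. These new centers are distinct, and none of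
them is shattered by `B₊` or `B₋` alone, so `s(B) ≥ |S₊ ∪ S₋| + |S₊ ∩ S₋| = s(B₊) + s(B₋)`.
-/

theorem shatteredCenters_mono {C D : Set (Ω → ℤ)} (hCD : C ⊆ D) :
    shatteredCenters C ⊆ shatteredCenters D := by
  rintro p ⟨hsupp, hne, hsh⟩
  refine ⟨hsupp, hne.mono hCD, fun θ => ?_⟩
  obtain ⟨f, hf, hfθ⟩ := hsh θ
  exact ⟨f, hCD hf, hfθ⟩

namespace ShattersCenter

variable {C : Set (Ω → ℤ)} {σ : Finset Ω} {h : Ω → ℤ} {i : Ω} {t : ℤ}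

theorem exists_lt (hC : ShattersCenter C σ h) (hi : i ∈ σ) : ∃ f ∈ C, f i < h i := by
  obtain ⟨f, hf, hfθ⟩ := hC.2 fun _ => false
  exact ⟨f, hf, (hfθ i hi).2 rfl⟩

theorem exists_gt (hC : ShattersCenter C σ h) (hi : i ∈ σ) : ∃ f ∈ C, h i < f i := by
  obtain ⟨f, hf, hfθ⟩ := hC.2 fun _ => true
  exact ⟨f, hf, (hfθ i hi).1 rfl⟩

theorem lt_level (hC : ShattersCenter C σ h) (hi : i ∈ σ) (hCt : ∀ f ∈ C, t < f i) :
    t < h i := by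
  obtain ⟨f, hf, hfi⟩ := hC.exists_lt hi
  exact (hCt f hf).trans hfi

theorem level_lt (hC : ShattersCenter C σ h) (hi : i ∈ σ) (hCt : ∀ f ∈ C, f i < t) :
    h i < t := by
  obtain ⟨f, hf, hfi⟩ := hC.exists_gt hi
  exact hfi.trans (hCt f hf)

variable [DecidableEq Ω] {Cp Cm : Set (Ω → ℤ)}

theorem insert_union (hp : ShattersCenter Cp σ h) (hm : ShattersCenter Cm σ h)
    (hpt : ∀ f ∈ Cp, t < f i) (hmt : ∀ f ∈ Cm, f i < t) :
    ShattersCenter (Cp ∪ Cm) (insert i σ) (Function.update h i t) := by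
  refine ⟨hp.1.mono Set.subset_union_left, fun θ => ?_⟩
  have extend : ∀ f : Ω → ℤ, (∀ j ∈ σ, (θ j = true → f j > h j) ∧ (θ j = false → f j < h j)) →
      (θ i = true → f i > t) ∧ (θ i = false → f i < t) →
      ∀ j ∈ insert i σ, (θ j = true → f j > Function.update h i t j) ∧
        (θ j = false → f j < Function.update h i t j) := by
    intro f hσ hi j hj
    rcases eq_or_ne j i with rfl | hji
    · simpa using hi
    · simpa [hji] using hσ j ((Finset.mem_insert.1 hj).resolve_left hji)
  cases hθ : θ i
  · obtain ⟨f, hf, hfθ⟩ := hm.2 θ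
    exact ⟨f, .inr hf, extend f hfθ (by simp [hθ, hmt f hf])⟩
  · obtain ⟨f, hf, hfθ⟩ := hp.2 θ
    exact ⟨f, .inl hf, extend f hfθ (by simp [hθ, hpt f hf])⟩

end ShattersCenter

section InsertCenter

variable [DecidableEq Ω] {C Cp Cm : Set (Ω → ℤ)} {p : Finset Ω × (Ω → ℤ)} {i : Ω} {t : ℤ}

def insertCenter (i : Ω) (t : ℤ) (p : Finset Ω × (Ω → ℤ)) : Finset Ω × (Ω → ℤ) :=
  (insert i p.1, Function.update p.2 i t)

theorem injOn_insertCenter :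
    Set.InjOn (insertCenter i t) {p : Finset Ω × (Ω → ℤ) | i ∉ p.1 ∧ p.2 i = 0} := by
  rintro ⟨σ₁, h₁⟩ ⟨hi₁, h₁i⟩ ⟨σ₂, h₂⟩ ⟨hi₂, h₂i⟩ heq
  obtain ⟨hσ, hh⟩ := Prod.mk.inj heq
  refine Prod.ext ?_ (funext fun j => ?_)
  · rw [← Finset.erase_insert hi₁, ← Finset.erase_insert hi₂]
    exact congrArg (·.erase i) hσ
  · rcases eq_or_ne j i with rfl | hji
    · exact h₁i.trans h₂i.symm
    · simpa [hji] using congrFun hh j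

theorem insertCenter_mem_shatteredCenters (hp : p ∈ shatteredCenters Cp)
    (hm : p ∈ shatteredCenters Cm) (hpt : ∀ f ∈ Cp, t < f i) (hmt : ∀ f ∈ Cm, f i < t) :
    insertCenter i t p ∈ shatteredCenters (Cp ∪ Cm) := by
  refine ⟨fun j hj => ?_, hp.2.insert_union hm.2 hpt hmt⟩
  rw [insertCenter, Finset.mem_insert, not_or] at hj
  simpa [insertCenter, hj.1] using hp.1 j hj.2

theorem insertCenter_notMem_shatteredCenters_of_lt (hC : ∀ f ∈ C, t < f i) :
    insertCenter i t p ∉ shatteredCenters C := fun hp =>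
  lt_irrefl t <| by simpa [insertCenter] using hp.2.lt_level (Finset.mem_insert_self i p.1) hC

theorem insertCenter_notMem_shatteredCenters_of_gt (hC : ∀ f ∈ C, f i < t) :
    insertCenter i t p ∉ shatteredCenters C := fun hp =>
  lt_irrefl t <| by simpa [insertCenter] using hp.2.level_lt (Finset.mem_insert_self i p.1) hC

end InsertCenter

theorem notMem_of_mem_shatteredCenters_inter (hp : p ∈ shatteredCenters Cp)
    (hm : p ∈ shatteredCenters Cm) (hpt : ∀ f ∈ Cp, t < f i) (hmt : ∀ f ∈ Cm, f i < t) :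
    i ∉ p.1 := fun hi => lt_asymm (hp.2.lt_level hi hpt) (hm.2.level_lt hi hmt)

theorem stmt_10_general (B Bp Bm : Set (Ω → ℤ))
    (hp : Bp ⊆ B) (hm : Bm ⊆ B)
    (i₀ : Ω) (t : ℤ)
    (hsep : (∀ f ∈ Bp, f i₀ > t) ∧ ∀ g ∈ Bm, g i₀ < t) :
    (shatteredCenters B).encard ≥
      (shatteredCenters Bp).encard + (shatteredCenters Bm).encard := by
  classical
  obtain ⟨hpt, hmt⟩ := hsep
  set Sp := shatteredCenters Bp
  set Sm := shatteredCenters Bm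
  have hi₀ : ∀ p ∈ Sp ∩ Sm, i₀ ∉ p.1 := fun p hp' =>
    notMem_of_mem_shatteredCenters_inter hp'.1 hp'.2 hpt hmt
  have hinj : Set.InjOn (insertCenter i₀ t) (Sp ∩ Sm) :=
    injOn_insertCenter.mono fun p hp' =>
      show i₀ ∉ p.1 ∧ p.2 i₀ = 0 from ⟨hi₀ p hp', hp'.1.1 i₀ (hi₀ p hp')⟩
  have hdisj : Disjoint (Sp ∪ Sm) (insertCenter i₀ t '' (Sp ∩ Sm)) := by
    rw [Set.disjoint_right]
    rintro _ ⟨p, -, rfl⟩ (hq | hq)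
    exacts [insertCenter_notMem_shatteredCenters_of_lt hpt hq,
      insertCenter_notMem_shatteredCenters_of_gt hmt hq]
  have hsub : Sp ∪ Sm ∪ insertCenter i₀ t '' (Sp ∩ Sm) ⊆ shatteredCenters B :=
    Set.union_subset (Set.union_subset (shatteredCenters_mono hp) (shatteredCenters_mono hm))
      (Set.image_subset_iff.2 fun p hp' => shatteredCenters_mono (Set.union_subset hp hm)
        (insertCenter_mem_shatteredCenters hp'.1 hp'.2 hpt hmt))
  calc Sp.encard + Sm.encard
      = (Sp ∪ Sm).encard + (insertCenter i₀ t '' (Sp ∩ Sm)).encard := by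
        rw [hinj.encard_image, Set.encard_union_add_encard_inter]
    _ = (Sp ∪ Sm ∪ insertCenter i₀ t '' (Sp ∩ Sm)).encard := (Set.encard_union_eq hdisj).symm
    _ ≤ (shatteredCenters B).encard := Set.encard_mono hsub

theorem stmt_10 (B Bp Bm : Set (Ω → ℤ))
    (hp : Bp ⊆ B) (hm : Bm ⊆ B) (hdisj : Disjoint Bp Bm)
    (i₀ : Ω) (t : ℤ)
    (hsep : (∀ f ∈ Bp, f i₀ > t) ∧ ∀ g ∈ Bm, g i₀ < t)
    (hfin : (shatteredCenters B).Finite) :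
    (shatteredCenters B).encard ≥
      (shatteredCenters Bp).encard + (shatteredCenters Bm).encard :=
  stmt_10_general B Bp Bm hp hm i₀ t hsep
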